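/- Let k ≥ 1 and m ≥ 1 be integers and let ω ∈ [0, 1 − 2^{−km}]. Define F(υ,k) := 2^{−k}·(√((2^k−1)·υ) + √(1−υ))². For every ω̃ : Fin m → ℝ with ω̃_j ∈ [0, 1 − 2^{−k}] for all j and Π_j (1 − ω̃_j) = 1 − ω, one has Π_j F(ω̃_j, k) ≤ F(1 − (1−ω)^{1/m}, k)^m, with equality when ω̃_j = 1 − (1−ω)^{1/m} for all j. That is, when the n = km parties split into m entangled groups of equal size k, the optimal distribution of the energy budget assigns each group the same energy 1 − (1−ω)^{1/m}. -/

import Mathlib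

open Finset

/-- `F(υ,k) = pEnt(υ,k) = 2^{−k}(√((2^k−1)υ) + √(1−υ))²`, the maximal success probability
for `k` parties sharing an entangled state with energy bound `υ`. -/
noncomputable def Fent (υ : ℝ) (k : ℕ) : ℝ :=
  (1 / (2 : ℝ) ^ k) * (Real.sqrt (((2 : ℝ) ^ k - 1) * υ) + Real.sqrt (1 - υ)) ^ 2

/-!
With `c = 2^k - 1` and `t = 1 - υ > 0` one has `F(υ,k) = t (1 + √(c (t⁻¹ - 1)))² / 2^k`.
The factors `t_j` multiply to `1 - ω` on both sides, so the claim reduces to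
`∏ (1 + √(c (x_j - 1))) ≤ (1 + √(c (G - 1)))^m` for `x_j = t_j⁻¹ ∈ [1, 1 + c]` with geometric
mean `G`. This is Jensen's inequality for `σ ↦ log (1 + √(c (e^σ - 1)))`, which is concave on
`[0, log (1 + c)]`: writing `p = √(c (e^σ - 1)) ∈ (0, c]`, its derivative is
`(c + p²) / (2p(1 + p))`, a decreasing function of `p`, and `p` increases with `σ`.
-/

open Real

section
variable {c : ℝ}

lemma antitoneOn_add_sq_div_two_mul_mul_one_add :
    AntitoneOn (fun p => (c + p ^ 2) / (2 * p * (1 + p))) (Set.Ioc 0 c) := by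
  rintro a ⟨ha, hac⟩ b ⟨hb, hbc⟩ hab
  rw [div_le_div_iff₀ (by positivity) (by positivity)]
  have hab' : a * b ≤ c * (a + b) := by nlinarith
  nlinarith [mul_nonneg (sub_nonneg.2 hab) (by linarith : 0 ≤ c + c * (a + b) - a * b)]

lemma hasDerivAt_log_one_add_sqrt_mul_exp_sub_one {σ : ℝ} (h : c * (exp σ - 1) ≠ 0) :
    HasDerivAt (fun σ => log (1 + √(c * (exp σ - 1))))
      (c * exp σ / (2 * √(c * (exp σ - 1)) * (1 + √(c * (exp σ - 1))))) σ := by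
  have h' := ((((hasDerivAt_exp σ).sub_const 1).const_mul c).sqrt h).const_add 1
  convert h'.log (by positivity) using 1
  field_simp

lemma sqrt_mul_exp_sub_one_mem_Ioc (hc : 0 ≤ c) {σ : ℝ} (hσ : σ ∈ Set.Ioo 0 (log (1 + c))) :
    √(c * (exp σ - 1)) ∈ Set.Ioc 0 c := by
  have hexp : exp σ < 1 + c := (lt_log_iff_exp_lt (by positivity)).1 hσ.2
  have hone : 1 < exp σ := one_lt_exp_iff.2 hσ.1
  refine ⟨sqrt_pos.2 (mul_pos (by linarith) (by linarith)), ?_⟩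
  rw [sqrt_le_left hc]
  nlinarith

lemma concaveOn_log_one_add_sqrt_mul_exp_sub_one (hc : 0 ≤ c) :
    ConcaveOn ℝ (Set.Icc 0 (log (1 + c))) fun σ => log (1 + √(c * (exp σ - 1))) := by
  have hderiv : ∀ σ ∈ Set.Ioo 0 (log (1 + c)), HasDerivAt (fun σ => log (1 + √(c * (exp σ - 1))))
      (c * exp σ / (2 * √(c * (exp σ - 1)) * (1 + √(c * (exp σ - 1))))) σ := fun σ hσ =>
    hasDerivAt_log_one_add_sqrt_mul_exp_sub_one
      (sqrt_pos.1 (sqrt_mul_exp_sub_one_mem_Ioc hc hσ).1).ne'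
  refine AntitoneOn.concaveOn_of_deriv (convex_Icc _ _) ?_ ?_ ?_
  · exact ContinuousOn.log (by fun_prop) fun σ _ => by positivity
  · rw [interior_Icc]
    exact fun σ hσ => (hderiv σ hσ).differentiableAt.differentiableWithinAt
  · rw [interior_Icc]
    intro a ha b hb hab
    have hcexp : ∀ σ ∈ Set.Ioo 0 (log (1 + c)), c * exp σ = c + √(c * (exp σ - 1)) ^ 2 := by
      intro σ hσ
      rw [sq_sqrt (mul_nonneg hc (by linarith [one_lt_exp_iff.2 hσ.1]))]
      ring
    rw [(hderiv a ha).deriv, (hderiv b hb).deriv, hcexp a ha, hcexp b hb]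
    refine antitoneOn_add_sq_div_two_mul_mul_one_add (sqrt_mul_exp_sub_one_mem_Ioc hc ha)
      (sqrt_mul_exp_sub_one_mem_Ioc hc hb) ?_
    gcongr

lemma prod_one_add_sqrt_mul_sub_one_le {ι : Type*} (s : Finset ι) (hc : 0 ≤ c) {x : ι → ℝ}
    (hx : ∀ i ∈ s, x i ∈ Set.Icc 1 (1 + c)) :
    ∏ i ∈ s, (1 + √(c * (x i - 1))) ≤
      (1 + √(c * ((∏ i ∈ s, x i) ^ ((#s : ℝ)⁻¹) - 1))) ^ #s := by
  rcases s.eq_empty_or_nonempty with rfl | hs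
  · simp
  have hx0 : ∀ i ∈ s, 0 < x i := fun i hi => by linarith [(hx i hi).1]
  have hjensen := (concaveOn_log_one_add_sqrt_mul_exp_sub_one hc).le_map_sum
    (t := s) (w := fun _ => (#s : ℝ)⁻¹) (p := fun i => log (x i)) (fun _ _ => by positivity)
    (by simp [hs.card_pos.ne'])
    (fun i hi => ⟨log_nonneg (hx i hi).1, log_le_log (hx0 i hi) (hx i hi).2⟩)
  have hn : (0 : ℝ) < #s := by exact_mod_cast hs.card_pos
  have hmean : exp (∑ i ∈ s, (#s : ℝ)⁻¹ • log (x i)) = (∏ i ∈ s, x i) ^ ((#s : ℝ)⁻¹) := by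
    rw [rpow_def_of_pos (prod_pos hx0), log_prod fun i hi => (hx0 i hi).ne', mul_comm]
    simp only [smul_eq_mul, mul_sum]
  rw [hmean, sum_congr rfl fun i hi => by rw [exp_log (hx0 i hi)], ← smul_sum, smul_eq_mul,
    inv_mul_le_iff₀ hn] at hjensen
  rw [← log_le_log_iff (prod_pos fun i _ => by positivity) (by positivity),
    log_prod fun i _ => by positivity, log_pow]
  exact hjensen

lemma sqrt_mul_one_sub_add_sqrt {t : ℝ} (ht : 0 < t) :
    √(c * (1 - t)) + √t = √t * (1 + √(c * (t⁻¹ - 1))) := by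
  have h : t * (c * (t⁻¹ - 1)) = c * (1 - t) := by field_simp
  rw [mul_one_add, ← sqrt_mul ht.le, h, add_comm]

end

lemma Fent_eq_of_lt_one {υ : ℝ} (k : ℕ) (hυ : υ < 1) :
    Fent υ k = (1 - υ) * (1 + √((2 ^ k - 1) * ((1 - υ)⁻¹ - 1))) ^ 2 / 2 ^ k := by
  have h := sqrt_mul_one_sub_add_sqrt (c := (2 : ℝ) ^ k - 1) (sub_pos.2 hυ)
  rw [sub_sub_cancel] at h
  rw [Fent, h, mul_pow, sq_sqrt (by linarith)]
  ring

theorem equal_groups_equal_energy_optimal_general (k m : ℕ) (hm : 1 ≤ m)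
    (ω : ℝ) (hω : ω ∈ Set.Icc (0 : ℝ) (1 - 1 / (2 : ℝ) ^ (k * m))) :
    -- the equal energy split dominates any admissible split
    (∀ w : Fin m → ℝ, (∀ j, w j ∈ Set.Icc (0 : ℝ) (1 - 1 / (2 : ℝ) ^ k)) →
      ∏ j, (1 - w j) = 1 - ω →
      ∏ j, Fent (w j) k ≤ Fent (1 - (1 - ω) ^ ((m : ℝ)⁻¹)) k ^ m) ∧
    -- the equal split satisfies energy conservation (equality case)
    (∏ j : Fin m, (1 - (1 - (1 - ω) ^ ((m : ℝ)⁻¹))) = 1 - ω) ∧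
    (∏ j : Fin m, Fent (1 - (1 - ω) ^ ((m : ℝ)⁻¹)) k =
      Fent (1 - (1 - ω) ^ ((m : ℝ)⁻¹)) k ^ m) := by
  have hpow : ∀ n : ℕ, 0 < 1 / (2 : ℝ) ^ n := fun n => by positivity
  have hω1 : 0 ≤ 1 - ω := by linarith [hω.2, hpow (k * m)]
  set τ := (1 - ω) ^ ((m : ℝ)⁻¹)
  have hτ : τ ^ m = 1 - ω := rpow_inv_natCast_pow hω1 (by omega)
  refine ⟨fun w hw hprod => ?_, by simp [hτ], by simp⟩
  have hc : (0 : ℝ) ≤ 2 ^ k - 1 := sub_nonneg.2 (one_le_pow₀ one_le_two)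
  have hw1 : ∀ j, 0 < 1 - w j := fun j => by linarith [(hw j).2, hpow k]
  have hx : ∀ j ∈ univ, (1 - w j)⁻¹ ∈ Set.Icc 1 (1 + (2 ^ k - 1)) := fun j _ => by
    refine ⟨(one_le_inv₀ (hw1 j)).2 (by linarith [(hw j).1]), ?_⟩
    rw [add_sub_cancel, inv_le_comm₀ (hw1 j) (by positivity), ← one_div]
    linarith [(hw j).2]
  have hτ0 : 0 < τ := rpow_pos_of_pos (hprod ▸ prod_pos fun j _ => hw1 j) _
  have hgeom := prod_one_add_sqrt_mul_sub_one_le univ hc hx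
  rw [prod_inv_distrib, hprod, card_univ, Fintype.card_fin, inv_rpow hω1] at hgeom
  calc ∏ j, Fent (w j) k
      = (∏ j, (1 - w j)) * (∏ j, (1 + √((2 ^ k - 1) * ((1 - w j)⁻¹ - 1)))) ^ 2 / (2 ^ k) ^ m := by
        rw [prod_congr rfl fun j _ => Fent_eq_of_lt_one k (by linarith [hw1 j]), prod_div_distrib,
          prod_mul_distrib, prod_pow, prod_const, card_univ, Fintype.card_fin]
    _ ≤ τ ^ m * ((1 + √((2 ^ k - 1) * (τ⁻¹ - 1))) ^ m) ^ 2 / (2 ^ k) ^ m := by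
        rw [hprod, hτ]; gcongr
    _ = Fent (1 - τ) k ^ m := by
        rw [Fent_eq_of_lt_one k (by linarith), sub_sub_cancel, div_pow, mul_pow,
          pow_right_comm _ m 2]

theorem equal_groups_equal_energy_optimal (k m : ℕ) (hk : 1 ≤ k) (hm : 1 ≤ m)
    (ω : ℝ) (hω : ω ∈ Set.Icc (0 : ℝ) (1 - 1 / (2 : ℝ) ^ (k * m))) :
    -- the equal energy split dominates any admissible split
    (∀ w : Fin m → ℝ, (∀ j, w j ∈ Set.Icc (0 : ℝ) (1 - 1 / (2 : ℝ) ^ k)) →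
      ∏ j, (1 - w j) = 1 - ω →
      ∏ j, Fent (w j) k ≤ Fent (1 - (1 - ω) ^ ((m : ℝ)⁻¹)) k ^ m) ∧
    -- the equal split satisfies energy conservation (equality case)
    (∏ j : Fin m, (1 - (1 - (1 - ω) ^ ((m : ℝ)⁻¹))) = 1 - ω) ∧
    (∏ j : Fin m, Fent (1 - (1 - ω) ^ ((m : ℝ)⁻¹)) k =
      Fent (1 - (1 - ω) ^ ((m : ℝ)⁻¹)) k ^ m) :=
  equal_groups_equal_energy_optimal_general k m hm ω hω
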